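/- Let I, J, K be a partition of {1,…,n} and let X_0 ⊆ X be such that Span{u(x) : x ∈ X_0} = V. If for every x ∈ X_0 there exist functions f, g with P(y|x) = f(y_I, y_K) · g(y_J, y_K) for all y ∈ Y, then v_H = 0 for every H ⊆ {1,…,n} with H ∩ I ≠ ∅ and H ∩ J ≠ ∅; consequently, for every x ∈ X there exist functions f, g with P(y|x) = f(y_I, y_K) · g(y_J, y_K) for all y ∈ Y. -/

import Mathlib

/-!
If `w` depends only on the coordinates in `S` and `i ∈ H \ S`, then averaging over the coordinate
`i` does not change `w`, so the terms of `T` and `insert i T` in the inclusion–exclusion sum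
defining `Q_H w` cancel and `Q_H w = 0`. Together with `w = ∑_H Q_H w`, this shows that `w` is a
sum of a function of `y_{S₁}` and a function of `y_{S₂}` iff `Q_H w = 0` for every `H` contained
in neither `S₁` nor `S₂`.

Taking logarithms, `P(·|x)` factorizes as `f(y_I, y_K) g(y_J, y_K)` iff the logit `⟪u x, v ·⟫`
splits in this way for `S₁ = I ∪ K`, `S₂ = J ∪ K`, i.e. iff `⟪u x, v_H⟫ = 0` for those `H`.
Since the `u x` with `x ∈ X₀` span `V`, the factorizations on `X₀` force `v_H = 0`, and then the
logit splits for every `x`.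
-/

open Finset
open scoped RealInnerProductSpace

/-- Averaging operator π_J. -/
noncomputable def piAvg {ι : Type*} [Fintype ι] [DecidableEq ι] {Z : ι → Type*}
    [∀ i, Fintype (Z i)] [∀ i, DecidableEq (Z i)] {V : Type*} [AddCommGroup V] [Module ℝ V]
    (J : Finset ι) (w : (∀ i, Z i) → V) : (∀ i, Z i) → V :=
  fun z => (∏ i ∈ Jᶜ, (Fintype.card (Z i) : ℝ))⁻¹ •
    ∑ z' ∈ Finset.univ.filter (fun z' : ∀ i, Z i => ∀ i ∈ J, z' i = z i), w z'

/-- Interaction projection Q_I. -/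
noncomputable def Qop {ι : Type*} [Fintype ι] [DecidableEq ι] {Z : ι → Type*}
    [∀ i, Fintype (Z i)] [∀ i, DecidableEq (Z i)] {V : Type*} [AddCommGroup V] [Module ℝ V]
    (I : Finset ι) (w : (∀ i, Z i) → V) : (∀ i, Z i) → V :=
  ∑ J ∈ I.powerset, ((-1 : ℝ) ^ (I \ J).card) • piAvg J w

lemma dependsOn_finset_sum {ι α M : Type*} {Z : ι → Type*} [AddCommMonoid M] {s : Finset α}
    {F : α → (∀ i, Z i) → M} {S : Set ι} (hF : ∀ a ∈ s, DependsOn (F a) S) :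
    DependsOn (∑ a ∈ s, F a) S := fun _ _ h => by
  simp only [Finset.sum_apply]
  exact sum_congr rfl fun a ha => hF a ha h

lemma sum_Icc_neg_one_pow_card_sdiff {ι : Type*} [DecidableEq ι] {T U : Finset ι} (h : T ⊆ U) :
    ∑ H ∈ Icc T U, (-1 : ℝ) ^ #(H \ T) = if T = U then 1 else 0 := by
  have hinj : Set.InjOn (T ∪ ·) (U \ T).powerset := fun R hR R' hR' hRR' => by
    simp only [coe_powerset, Set.mem_preimage, Set.mem_powerset_iff, coe_subset] at hR hR'
    rw [← union_sdiff_cancel_left (disjoint_of_subset_left hR sdiff_disjoint).symm,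
      ← union_sdiff_cancel_left (disjoint_of_subset_left hR' sdiff_disjoint).symm]
    exact congrArg (· \ T) hRR'
  rw [Icc_eq_image_powerset h, sum_image hinj]
  have hsdiff : ∀ R ∈ (U \ T).powerset, (T ∪ R) \ T = R := fun R hR =>
    union_sdiff_cancel_left (disjoint_of_subset_left (mem_powerset.mp hR) sdiff_disjoint).symm
  rw [sum_congr rfl fun R hR => by rw [hsdiff R hR]]
  have hsum : ∑ R ∈ (U \ T).powerset, (-1 : ℝ) ^ #R = if U \ T = ∅ then 1 else 0 := by
    exact_mod_cast sum_powerset_neg_one_pow_card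
  rw [hsum]
  exact if_congr (sdiff_eq_empty_iff_subset.trans ⟨h.antisymm, fun hTU => hTU ▸ subset_rfl⟩)
    rfl rfl

section InteractionDecomposition

variable {ι : Type*} [Fintype ι] [DecidableEq ι] {Z : ι → Type*}
  [∀ i, Fintype (Z i)] [∀ i, DecidableEq (Z i)] {V : Type*} [AddCommGroup V] [Module ℝ V]

def agreeOn (J : Finset ι) (z : ∀ i, Z i) : Finset (∀ i, Z i) :=
  {z' | ∀ i ∈ J, z' i = z i}

@[simp]
lemma mem_agreeOn {J : Finset ι} {z z' : ∀ i, Z i} :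
    z' ∈ agreeOn J z ↔ ∀ i ∈ J, z' i = z i := by
  simp [agreeOn]

lemma agreeOn_eq_piFinset (J : Finset ι) (z : ∀ i, Z i) :
    agreeOn J z = Fintype.piFinset fun i => if i ∈ J then {z i} else univ := by
  ext z'
  simp only [mem_agreeOn, Fintype.mem_piFinset]
  refine ⟨fun h i => ?_, fun h i hi => by simpa [hi] using h i⟩
  split_ifs with hi <;> simp [h i, hi]

lemma card_agreeOn (J : Finset ι) (z : ∀ i, Z i) :
    #(agreeOn J z) = ∏ i ∈ Jᶜ, Fintype.card (Z i) := by
  rw [agreeOn_eq_piFinset, Fintype.card_piFinset, ← prod_mul_prod_compl J]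
  have h_in : ∀ i ∈ J, #(if i ∈ J then {z i} else univ) = 1 := fun i hi => by simp [hi]
  have h_out : ∀ i ∈ Jᶜ, #(if i ∈ J then {z i} else univ) = Fintype.card (Z i) :=
    fun i hi => by simp [mem_compl.mp hi]
  rw [prod_congr rfl h_in, prod_congr rfl h_out, prod_const_one, one_mul]

lemma agreeOn_congr {J : Finset ι} {z z' : ∀ i, Z i} (h : ∀ i ∈ J, z i = z' i) :
    agreeOn J z = agreeOn J z' := by
  ext x
  simp only [mem_agreeOn]
  exact forall₂_congr fun i hi => by rw [h i hi]

lemma piAvg_apply (J : Finset ι) (w : (∀ i, Z i) → V) (z : ∀ i, Z i) :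
    piAvg J w z = (#(agreeOn J z) : ℝ)⁻¹ • ∑ z' ∈ agreeOn J z, w z' := by
  rw [card_agreeOn, Nat.cast_prod]
  rfl

lemma piAvg_dependsOn (J : Finset ι) (w : (∀ i, Z i) → V) : DependsOn (piAvg J w) J :=
  fun _ _ h => by simp only [piAvg_apply, agreeOn_congr h]

lemma piAvg_univ (w : (∀ i, Z i) → V) : piAvg univ w = w := by
  funext z
  have : agreeOn univ z = {z} := by ext; simp [funext_iff]
  rw [piAvg_apply, this, card_singleton, sum_singleton, Nat.cast_one, inv_one, one_smul]

lemma piAvg_add (J : Finset ι) (w₁ w₂ : (∀ i, Z i) → V) :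
    piAvg J (w₁ + w₂) = piAvg J w₁ + piAvg J w₂ := by
  funext z
  simp only [piAvg_apply, Pi.add_apply, sum_add_distrib, smul_add]

lemma piAvg_comp_linearMap {W : Type*} [AddCommGroup W] [Module ℝ W] (L : V →ₗ[ℝ] W)
    (J : Finset ι) (w : (∀ i, Z i) → V) : piAvg J (L ∘ w) = L ∘ piAvg J w := by
  funext z
  simp only [piAvg_apply, Function.comp_apply, map_smul, map_sum]

/-- Double counting over `agreeOn T' z ×ˢ agreeOn T z`: exchanging the coordinates outside `T'`
is an involution of this set, and `T'.piecewise a b` agrees with `b` on `S`. -/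
lemma card_smul_sum_agreeOn_eq {M : Type*} [AddCommMonoid M] {S : Set ι} {w : (∀ i, Z i) → M}
    (hw : DependsOn w S) {T T' : Finset ι} (hT : T ⊆ T') (hS : ∀ i ∈ T', i ∈ S → i ∈ T) (z : ∀ i, Z i) :
    #(agreeOn T z) • ∑ a ∈ agreeOn T' z, w a = #(agreeOn T' z) • ∑ b ∈ agreeOn T z, w b := by
  set A := agreeOn T' z
  set B := agreeOn T z
  let σ : (∀ i, Z i) × (∀ i, Z i) → (∀ i, Z i) × (∀ i, Z i) :=
    fun p => (T'.piecewise p.1 p.2, T'.piecewise p.2 p.1)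
  have hσ_mem : ∀ p ∈ A ×ˢ B, σ p ∈ A ×ˢ B := by
    simp only [mem_product, mem_agreeOn, and_imp, A, B, σ]
    intro p ha hb
    refine ⟨fun i hi => by simp [hi, ha i hi], fun i hi => by simp [hT hi, hb i hi]⟩
  have hσ_invol : ∀ p, σ (σ p) = p := by
    intro p
    ext i <;> by_cases hi : i ∈ T' <;> simp [σ, hi]
  have hσ_sum : ∑ p ∈ A ×ˢ B, w (σ p).1 = ∑ p ∈ A ×ˢ B, w p.1 :=
    sum_nbij' σ σ hσ_mem hσ_mem (fun p _ => hσ_invol p) (fun p _ => hσ_invol p)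
      fun _ _ => rfl
  have hσ_fst : ∀ p ∈ A ×ˢ B, w (σ p).1 = w p.2 := by
    simp only [mem_product, mem_agreeOn, and_imp, A, B, σ]
    intro p ha hb
    refine hw fun i hiS => ?_
    by_cases hi : i ∈ T'
    · simp [hi, ha i hi, hb i (hS i hi hiS)]
    · simp [hi]
  calc #B • ∑ a ∈ A, w a = ∑ p ∈ A ×ˢ B, w p.1 := by
        simp only [sum_product, sum_const, smul_sum]
    _ = ∑ p ∈ A ×ˢ B, w p.2 := by rw [← hσ_sum, sum_congr rfl hσ_fst]
    _ = #A • ∑ b ∈ B, w b := by simp only [sum_product_right, sum_const, smul_sum]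

lemma piAvg_eq_of_dependsOn {S : Set ι} {w : (∀ i, Z i) → V} (hw : DependsOn w S)
    {T T' : Finset ι} (hT : T ⊆ T') (hS : ∀ i ∈ T', i ∈ S → i ∈ T) :
    piAvg T' w = piAvg T w := by
  funext z
  have hcard_pos : ∀ J : Finset ι, (0 : ℝ) < #(agreeOn J z) := fun J => by
    exact_mod_cast card_pos.mpr ⟨z, mem_agreeOn.mpr fun _ _ => rfl⟩
  have key := card_smul_sum_agreeOn_eq hw hT hS z
  rw [← Nat.cast_smul_eq_nsmul ℝ, ← Nat.cast_smul_eq_nsmul ℝ (#(agreeOn T' z))] at key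
  rw [piAvg_apply, piAvg_apply, inv_smul_eq_iff₀ (hcard_pos T').ne', smul_comm, ← key,
    inv_smul_smul₀ (hcard_pos T).ne']

lemma Qop_dependsOn (H : Finset ι) (w : (∀ i, Z i) → V) : DependsOn (Qop H w) H :=
  dependsOn_finset_sum fun T hT => fun _ _ h => by
    simp only [Pi.smul_apply, piAvg_dependsOn T w fun i hi => h i (mem_powerset.mp hT hi)]

lemma Qop_add (H : Finset ι) (w₁ w₂ : (∀ i, Z i) → V) :
    Qop H (w₁ + w₂) = Qop H w₁ + Qop H w₂ := by
  simp only [Qop, piAvg_add, smul_add, sum_add_distrib]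

lemma Qop_comp_linearMap {W : Type*} [AddCommGroup W] [Module ℝ W] (L : V →ₗ[ℝ] W)
    (H : Finset ι) (w : (∀ i, Z i) → V) : Qop H (L ∘ w) = L ∘ Qop H w := by
  funext z
  rw [Qop, Qop, Finset.sum_apply, Function.comp_apply, Finset.sum_apply, map_sum]
  refine sum_congr rfl fun T _ => ?_
  rw [Pi.smul_apply, Pi.smul_apply, map_smul, piAvg_comp_linearMap, Function.comp_apply]

lemma Qop_eq_zero_of_dependsOn {S : Set ι} {w : (∀ i, Z i) → V} (hw : DependsOn w S)
    {H : Finset ι} {i : ι} (hiH : i ∈ H) (hiS : i ∉ S) : Qop H w = 0 := by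
  have hi : i ∉ H.erase i := notMem_erase i H
  rw [Qop, ← insert_erase hiH, sum_powerset_insert hi, ← sum_add_distrib]
  refine sum_eq_zero fun T hT => ?_
  have hiT : i ∉ T := fun h => hi (mem_powerset.mp hT h)
  have hcard : #(insert i (H.erase i) \ T) = #(insert i (H.erase i) \ insert i T) + 1 := by
    rw [sdiff_insert, card_erase_add_one (mem_sdiff.mpr ⟨mem_insert_self i _, hiT⟩)]
  have havg : piAvg (insert i T) w = piAvg T w :=
    piAvg_eq_of_dependsOn hw (subset_insert i T) fun j hj hjS =>
      (mem_insert.mp hj).resolve_left fun hji => hiS (hji ▸ hjS)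
  rw [havg, hcard, pow_succ, mul_neg_one, neg_smul, neg_add_cancel]

lemma sum_powerset_Qop (U : Finset ι) (w : (∀ i, Z i) → V) :
    ∑ H ∈ U.powerset, Qop H w = piAvg U w := by
  calc ∑ H ∈ U.powerset, Qop H w
      = ∑ T ∈ U.powerset, (∑ H ∈ Icc T U, (-1 : ℝ) ^ #(H \ T)) • piAvg T w := by
        simp only [Qop, sum_smul]
        refine sum_comm' fun H T => ?_
        simp only [mem_powerset, mem_Icc]
        constructor
        · rintro ⟨hHU, hTH⟩; exact ⟨⟨hTH, hHU⟩, hTH.trans hHU⟩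
        · rintro ⟨⟨hTH, hHU⟩, -⟩; exact ⟨hHU, hTH⟩
    _ = ∑ T ∈ U.powerset, (if T = U then (1 : ℝ) else 0) • piAvg T w :=
        sum_congr rfl fun T hT => by rw [sum_Icc_neg_one_pow_card_sdiff (mem_powerset.mp hT)]
    _ = piAvg U w := by simp [ite_smul]

theorem exists_dependsOn_add_iff {S₁ S₂ : Set ι} {w : (∀ i, Z i) → V} :
    (∃ a b : (∀ i, Z i) → V, DependsOn a S₁ ∧ DependsOn b S₂ ∧ w = a + b) ↔
      ∀ H : Finset ι, ¬ ↑H ⊆ S₁ → ¬ ↑H ⊆ S₂ → Qop H w = 0 := by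
  classical
  constructor
  · rintro ⟨a, b, ha, hb, rfl⟩ H h₁ h₂
    obtain ⟨i, hiH, hi₁⟩ := Set.not_subset.mp h₁
    obtain ⟨j, hjH, hj₂⟩ := Set.not_subset.mp h₂
    rw [Qop_add, Qop_eq_zero_of_dependsOn ha hiH hi₁, Qop_eq_zero_of_dependsOn hb hjH hj₂,
      add_zero]
  · intro h
    refine ⟨∑ H ∈ univ.powerset with ↑H ⊆ S₁, Qop H w,
      ∑ H ∈ univ.powerset with ¬ ↑H ⊆ S₁, Qop H w, ?_, ?_, ?_⟩
    · exact dependsOn_finset_sum fun H hH => (Qop_dependsOn H w).mono (mem_filter.mp hH).2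
    · refine dependsOn_finset_sum fun H hH => ?_
      by_cases h₂ : ↑H ⊆ S₂
      · exact (Qop_dependsOn H w).mono h₂
      · rw [h H (mem_filter.mp hH).2 h₂]
        exact fun _ _ _ => rfl
    · rw [sum_filter_add_sum_filter_not, sum_powerset_Qop, piAvg_univ]

end InteractionDecomposition

lemma eq_log_add_log_add_log_of_exp_div_eq_mul {t Z a b : ℝ} (hZ : 0 < Z)
    (h : Real.exp t / Z = a * b) : t = Real.log a + (Real.log b + Real.log Z) := by
  have hab : a * b ≠ 0 := h ▸ (div_pos (Real.exp_pos t) hZ).ne'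
  rw [← add_assoc, ← Real.log_mul (left_ne_zero_of_mul hab) (right_ne_zero_of_mul hab), ← h,
    Real.log_div (Real.exp_ne_zero t) hZ.ne', Real.log_exp, sub_add_cancel]

section Softmax

variable {ι : Type*} [Fintype ι] [DecidableEq ι] {Z : ι → Type*} [∀ i, Fintype (Z i)]

theorem softmax_factorizes_iff {θ : (∀ i, Z i) → ℝ} {S₁ S₂ : Set ι} :
    (∃ f g : (∀ i, Z i) → ℝ, DependsOn f S₁ ∧ DependsOn g S₂ ∧
        ∀ z, Real.exp (θ z) / ∑ z', Real.exp (θ z') = f z * g z) ↔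
      ∃ a b : (∀ i, Z i) → ℝ, DependsOn a S₁ ∧ DependsOn b S₂ ∧ θ = a + b := by
  constructor
  · rintro ⟨f, g, hf, hg, hfg⟩
    refine ⟨fun z => Real.log (f z), fun z => Real.log (g z) + Real.log (∑ z', Real.exp (θ z')),
      fun _ _ h => by simp only [hf h], fun _ _ h => by simp only [hg h], funext fun z => ?_⟩
    exact eq_log_add_log_add_log_of_exp_div_eq_mul
      (sum_pos (fun _ _ => Real.exp_pos _) ⟨z, mem_univ z⟩) (hfg z)
  · rintro ⟨a, b, ha, hb, rfl⟩
    refine ⟨fun z => Real.exp (a z) / ∑ z', Real.exp ((a + b) z'), fun z => Real.exp (b z),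
      fun _ _ h => by simp only [ha h], fun _ _ h => by simp only [hb h], fun z => ?_⟩
    rw [Pi.add_apply, Real.exp_add, mul_div_right_comm]

end Softmax

lemma eq_zero_of_span_eq_top_of_forall_inner_eq_zero {E : Type*} [NormedAddCommGroup E]
    [InnerProductSpace ℝ E] {s : Set E} (hs : Submodule.span ℝ s = ⊤) {w : E}
    (h : ∀ c ∈ s, ⟪c, w⟫ = 0) : w = 0 := by
  have hortho : Submodule.span ℝ s ⟂ Submodule.span ℝ {w} :=
    Submodule.isOrtho_span.mpr fun c hc _ hw => (Set.mem_singleton_iff.mp hw) ▸ h c hc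
  rwa [hs, Submodule.isOrtho_top_left, Submodule.span_singleton_eq_bot] at hortho

theorem vH_eq_zero_of_span_general {n : ℕ}
    (X : Type*)
    (Y : Fin n → Type*) [∀ j, Fintype (Y j)] [∀ j, DecidableEq (Y j)]
    (V : Type*) [NormedAddCommGroup V] [InnerProductSpace ℝ V]
    (u : X → V) (v : (∀ j, Y j) → V)
    (P : X → (∀ j, Y j) → ℝ)
    (hP : ∀ x y, P x y =
      Real.exp ⟪u x, v y⟫ / ∑ y' : ∀ j, Y j, Real.exp ⟪u x, v y'⟫)
    (I J K : Finset (Fin n))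
    (hIJ : Disjoint I J) (hIK : Disjoint I K) (hJK : Disjoint J K)
    (X₀ : Set X) (hspan : Submodule.span ℝ (u '' X₀) = ⊤)
    (hfact : ∀ x ∈ X₀, ∃ f g : (∀ j, Y j) → ℝ,
      (∀ y y' : ∀ j, Y j, (∀ j ∈ I ∪ K, y j = y' j) → f y = f y') ∧
      (∀ y y' : ∀ j, Y j, (∀ j ∈ J ∪ K, y j = y' j) → g y = g y') ∧
      (∀ y : ∀ j, Y j, P x y = f y * g y)) :
    (∀ H : Finset (Fin n), (H ∩ I).Nonempty → (H ∩ J).Nonempty → Qop H v = 0) ∧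
    (∀ x : X, ∃ f g : (∀ j, Y j) → ℝ,
      (∀ y y' : ∀ j, Y j, (∀ j ∈ I ∪ K, y j = y' j) → f y = f y') ∧
      (∀ y y' : ∀ j, Y j, (∀ j ∈ J ∪ K, y j = y' j) → g y = g y') ∧
      (∀ y : ∀ j, Y j, P x y = f y * g y)) := by
  have hQ : ∀ H : Finset (Fin n), ¬ ↑H ⊆ (↑(I ∪ K) : Set (Fin n)) →
      ¬ ↑H ⊆ (↑(J ∪ K) : Set (Fin n)) → Qop H v = 0 := by
    refine fun H hHI hHJ => funext fun y => eq_zero_of_span_eq_top_of_forall_inner_eq_zero hspan ?_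
    rintro _ ⟨x, hx, rfl⟩
    obtain ⟨f, g, hf, hg, hfg⟩ := hfact x hx
    obtain ⟨a, b, ha, hb, hlogit⟩ := softmax_factorizes_iff (θ := fun y => ⟪u x, v y⟫).mp
      ⟨f, g, hf, hg, fun y => (hP x y).symm.trans (hfg y)⟩
    exact (congrFun (Qop_comp_linearMap (innerₛₗ ℝ (u x)) H v) y).symm.trans
      (congrFun (exists_dependsOn_add_iff.mp ⟨a, b, ha, hb, hlogit⟩ H hHI hHJ) y)
  refine ⟨fun H ⟨i, hi⟩ ⟨j, hj⟩ => hQ H ?_ ?_, fun x => ?_⟩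
  · exact fun hsub => disjoint_left.mp (disjoint_union_right.mpr ⟨hIJ.symm, hJK⟩)
      (mem_inter.mp hj).2 (hsub (mem_inter.mp hj).1)
  · exact fun hsub => disjoint_left.mp (disjoint_union_right.mpr ⟨hIJ, hIK⟩)
      (mem_inter.mp hi).2 (hsub (mem_inter.mp hi).1)
  obtain ⟨a, b, ha, hb, rfl⟩ := exists_dependsOn_add_iff.mpr hQ
  obtain ⟨f, g, hf, hg, hfg⟩ := softmax_factorizes_iff (θ := fun y => ⟪u x, (a + b) y⟫).mpr
    ⟨fun y => ⟪u x, a y⟫, fun y => ⟪u x, b y⟫, fun _ _ h => by simp only [ha h],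
      fun _ _ h => by simp only [hb h], funext fun y => inner_add_right _ _ _⟩
  exact ⟨f, g, hf, hg, fun y => (hP x y).trans (hfg y)⟩

/-- if the conditional independence factorization holds for all `x` in a set
`X₀` whose embeddings span `V`, then the interaction components `v_H` with `H` meeting
both `I` and `J` vanish, and therefore the factorization holds for *all* `x ∈ X`. -/
theorem vH_eq_zero_of_span {n : ℕ}
    (X : Type*) [Fintype X] [Nonempty X]
    (Y : Fin n → Type*) [∀ j, Fintype (Y j)] [∀ j, Nonempty (Y j)] [∀ j, DecidableEq (Y j)]
    (V : Type*) [NormedAddCommGroup V] [InnerProductSpace ℝ V] [FiniteDimensional ℝ V]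
    (u : X → V) (v : (∀ j, Y j) → V)
    (P : X → (∀ j, Y j) → ℝ)
    (hP : ∀ x y, P x y =
      Real.exp ⟪u x, v y⟫ / ∑ y' : ∀ j, Y j, Real.exp ⟪u x, v y'⟫)
    (I J K : Finset (Fin n))
    (hIJ : Disjoint I J) (hIK : Disjoint I K) (hJK : Disjoint J K)
    (hIJK : I ∪ J ∪ K = Finset.univ)
    (X₀ : Set X) (hspan : Submodule.span ℝ (u '' X₀) = ⊤)
    (hfact : ∀ x ∈ X₀, ∃ f g : (∀ j, Y j) → ℝ,
      (∀ y y' : ∀ j, Y j, (∀ j ∈ I ∪ K, y j = y' j) → f y = f y') ∧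
      (∀ y y' : ∀ j, Y j, (∀ j ∈ J ∪ K, y j = y' j) → g y = g y') ∧
      (∀ y : ∀ j, Y j, P x y = f y * g y)) :
    (∀ H : Finset (Fin n), (H ∩ I).Nonempty → (H ∩ J).Nonempty → Qop H v = 0) ∧
    (∀ x : X, ∃ f g : (∀ j, Y j) → ℝ,
      (∀ y y' : ∀ j, Y j, (∀ j ∈ I ∪ K, y j = y' j) → f y = f y') ∧
      (∀ y y' : ∀ j, Y j, (∀ j ∈ J ∪ K, y j = y' j) → g y = g y') ∧
      (∀ y : ∀ j, Y j, P x y = f y * g y)) :=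
  vH_eq_zero_of_span_general X Y V u v P hP I J K hIJ hIK hJK X₀ hspan hfact
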